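/- For all nonnegative integers m, n and nonzero complex q and complex z₁, z₂: h_{m,n}(z₁, z₂ | 1/q) = q^{-mn} i^{-m-n} H_{m,n}(i z₁, i z₂ | q), where i is the imaginary unit. -/

import Mathlib

open Finset Filter

noncomputable def qPoch (a q : ℂ) (n : ℕ) : ℂ :=
  ∏ j ∈ Finset.range n, (1 - a * q ^ j)

noncomputable def qbinom (q : ℂ) : ℕ → ℕ → ℂ
  | _, 0 => 1
  | 0, _ + 1 => 0
  | m + 1, k + 1 => qbinom q m k + q ^ (k + 1) * qbinom q m (k + 1)

/-- The first q-analogue of the 2D Hermite polynomials. -/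
noncomputable def H2D (q z1 z2 : ℂ) (m n : ℕ) : ℂ :=
  ∑ k ∈ Finset.range (min m n + 1),
    qbinom q m k * qbinom q n k * (-1) ^ k * q ^ (k.choose 2) * qPoch q q k *
      z1 ^ (m - k) * z2 ^ (n - k)

/-- The second q-analogue of the 2D Hermite polynomials. -/
noncomputable def h2D (q z1 z2 : ℂ) (m n : ℕ) : ℂ :=
  ∑ j ∈ Finset.range (min m n + 1),
    qbinom q m j * qbinom q n j * q ^ ((m - j) * (n - j)) * (-1) ^ j * qPoch q q j *
      z1 ^ (m - j) * z2 ^ (n - j)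

/-- The q-2D ultraspherical (q-disk / q-Zernike) polynomials. -/
noncomputable def p2D (q b z1 z2 : ℂ) (m n : ℕ) : ℂ :=
  ∑ k ∈ Finset.range (min m n + 1),
    qbinom q m k * qbinom q n k * (-1) ^ k * q ^ (k.choose 2) * qPoch q q k *
      qPoch (b * q) q (m + n - k) * z1 ^ (m - k) * z2 ^ (n - k)

/-- The infinite q-Pochhammer product (a;q)_∞. -/
noncomputable def qPochInf (a q : ℂ) : ℂ :=
  ∏' j : ℕ, (1 - a * q ^ j)

/-!
Compare the two sums term by term, writing `m = k + a`, `n = k + b`. The inversion rules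
`[k + a, k]_{1/q} = q^{-ka} [k + a, k]_q` and `(1/q; 1/q)_k = (-1)^k q^{-(k+1 choose 2)} (q; q)_k`
turn the `k`-th term of `h_{m,n}(z₁, z₂ | 1/q)` into the `k`-th term of the right-hand side:
the powers of `i` leave a sign `(-1)^k`, and the powers of `q` match because
`(k choose 2) + (k+1 choose 2) = k²`.
-/

lemma qbinom_zero_right (q : ℂ) (m : ℕ) : qbinom q m 0 = 1 := by
  cases m <;> rfl

lemma qbinom_succ_succ (q : ℂ) (m k : ℕ) :
    qbinom q (m + 1) (k + 1) = qbinom q m k + q ^ (k + 1) * qbinom q m (k + 1) :=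
  rfl

lemma qbinom_eq_zero_of_lt (q : ℂ) : ∀ {m k : ℕ}, m < k → qbinom q m k = 0
  | 0, _ + 1, _ => rfl
  | m + 1, k + 1, h => by
    rw [qbinom_succ_succ, qbinom_eq_zero_of_lt q (by omega : m < k),
      qbinom_eq_zero_of_lt q (by omega : m < k + 1)]
    ring

-- The second q-Pascal rule: what `qbinom_succ_succ` becomes after `q ↦ q⁻¹`.
lemma qbinom_succ_succ_of_le (q : ℂ) : ∀ {m k : ℕ}, k ≤ m →
    qbinom q (m + 1) (k + 1) = q ^ (m - k) * qbinom q m k + qbinom q m (k + 1)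
  | 0, 0, _ => by simp [qbinom]
  | m + 1, 0, _ => by
    have ih := qbinom_succ_succ_of_le q (Nat.zero_le m)
    simp only [qbinom_succ_succ, qbinom_zero_right, Nat.sub_zero] at ih ⊢
    linear_combination q * ih
  | m + 1, j + 1, h => by
    rcases (Nat.le_of_succ_le_succ h).eq_or_lt with rfl | hjm
    · rw [qbinom_succ_succ _ (j + 1), qbinom_eq_zero_of_lt q (by omega : j + 1 < j + 2)]
      simp
    · obtain ⟨d, rfl⟩ : ∃ d, m = j + d + 1 := ⟨m - j - 1, by omega⟩
      have ih₁ := qbinom_succ_succ_of_le q (by omega : j ≤ j + d + 1)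
      have ih₂ := qbinom_succ_succ_of_le q (by omega : j + 1 ≤ j + d + 1)
      rw [show j + d + 1 - j = d + 1 by omega] at ih₁
      rw [show j + d + 1 - (j + 1) = d by omega] at ih₂
      rw [show j + d + 1 + 1 - (j + 1) = d + 1 by omega, qbinom_succ_succ _ (j + d + 1 + 1)]
      linear_combination ih₁ + q ^ (j + 2) * ih₂ - q ^ (d + 1) * qbinom_succ_succ q (j + d + 1) j
        - qbinom_succ_succ q (j + d + 1) (j + 1)

lemma qbinom_inv_mul_pow {q : ℂ} (hq : q ≠ 0) :
    ∀ m k, qbinom q⁻¹ m k * q ^ (m * k) = q ^ (k * k) * qbinom q m k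
  | _, 0 => by simp [qbinom_zero_right]
  | 0, k + 1 => by simp [qbinom_eq_zero_of_lt _ (Nat.succ_pos k)]
  | m + 1, j + 1 => by
    rcases le_or_gt j m with hjm | hmj
    · obtain ⟨d, rfl⟩ : ∃ d, m = j + d := ⟨m - j, by omega⟩
      have ih₁ := qbinom_inv_mul_pow hq (j + d) j
      have ih₂ := qbinom_inv_mul_pow hq (j + d) (j + 1)
      have hinv : q⁻¹ ^ (j + 1) * q ^ (j + 1) = 1 := by
        rw [inv_pow, inv_mul_cancel₀ (pow_ne_zero _ hq)]
      rw [qbinom_succ_succ, qbinom_succ_succ_of_le q (Nat.le_add_right j d), Nat.add_sub_cancel_left]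
      linear_combination q ^ (2 * j + d + 1) * ih₁ + q⁻¹ ^ (j + 1) * q ^ (j + 1) * ih₂
        + q ^ ((j + 1) * (j + 1)) * qbinom q (j + d) (j + 1) * hinv
    · rw [qbinom_eq_zero_of_lt _ (by omega : m + 1 < j + 1),
        qbinom_eq_zero_of_lt _ (by omega : m + 1 < j + 1)]
      ring

lemma qbinom_inv_add {q : ℂ} (hq : q ≠ 0) (k d : ℕ) :
    qbinom q⁻¹ (k + d) k = q⁻¹ ^ (k * d) * qbinom q (k + d) k := by
  have h := qbinom_inv_mul_pow hq (k + d) k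
  rw [add_mul, pow_add, mul_comm d k] at h
  rw [inv_pow, eq_inv_mul_iff_mul_eq₀ (pow_ne_zero _ hq)]
  exact mul_left_cancel₀ (pow_ne_zero (k * k) hq) (by linear_combination h)

lemma qPoch_inv_inv {q : ℂ} (hq : q ≠ 0) (k : ℕ) :
    qPoch q⁻¹ q⁻¹ k = (-1) ^ k * q⁻¹ ^ ((k + 1).choose 2) * qPoch q q k := by
  have hsum : ∑ j ∈ range k, (j + 1) = (k + 1).choose 2 := by
    rw [Nat.choose_two_right, ← Finset.sum_range_id, Finset.sum_range_succ', add_zero]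
  have hfactor : ∀ j : ℕ, 1 - q⁻¹ * q⁻¹ ^ j = -1 * q⁻¹ ^ (j + 1) * (1 - q * q ^ j) := by
    intro j
    have hinv : q⁻¹ ^ (j + 1) * q ^ (j + 1) = 1 := by
      rw [inv_pow, inv_mul_cancel₀ (pow_ne_zero _ hq)]
    linear_combination -hinv
  simp only [qPoch, hfactor, prod_mul_distrib, prod_const, card_range, prod_pow_eq_pow_sum, hsum]

lemma succ_choose_two (n : ℕ) : (n + 1).choose 2 = n.choose 2 + n := by
  rw [Nat.choose_succ_succ', Nat.choose_one_right, add_comm]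

lemma choose_two_add_succ_choose_two (k : ℕ) : k.choose 2 + (k + 1).choose 2 = k * k := by
  induction k with
  | zero => rfl
  | succ k ih =>
    rw [succ_choose_two k] at ih
    rw [succ_choose_two (k + 1), succ_choose_two k]
    linarith

lemma inv_I_pow_two_mul_add (k a b : ℕ) :
    (Complex.I ^ (k + a + (k + b)))⁻¹ = (-1) ^ k * (Complex.I ^ a)⁻¹ * (Complex.I ^ b)⁻¹ := by
  rw [show k + a + (k + b) = 2 * k + a + b by ring, pow_add, pow_add, pow_mul, Complex.I_sq,
    mul_inv, mul_inv, ← inv_pow, inv_neg, inv_one]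

theorem stmt8 (m n : ℕ) (q : ℂ) (hq : q ≠ 0) (z1 z2 : ℂ) :
    h2D (1 / q) z1 z2 m n =
      (q ^ (m * n))⁻¹ * (Complex.I ^ (m + n))⁻¹ *
        H2D q (Complex.I * z1) (Complex.I * z2) m n := by
  rw [one_div, h2D, H2D, mul_sum]
  refine sum_congr rfl fun k hk => ?_
  obtain ⟨hkm, hkn⟩ : k ≤ m ∧ k ≤ n := by simpa [Nat.lt_succ_iff] using hk
  obtain ⟨a, rfl⟩ : ∃ a, m = k + a := ⟨m - k, by omega⟩
  obtain ⟨b, rfl⟩ : ∃ b, n = k + b := ⟨n - k, by omega⟩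
  have hpow : q⁻¹ ^ ((k + 1).choose 2) = q⁻¹ ^ (k * k) * q ^ (k.choose 2) := by
    rw [← choose_two_add_succ_choose_two, pow_add, inv_pow, inv_pow]
    field_simp
  rw [Nat.add_sub_cancel_left, Nat.add_sub_cancel_left, qbinom_inv_add hq, qbinom_inv_add hq,
    qPoch_inv_inv hq, hpow, inv_I_pow_two_mul_add, ← inv_pow]
  field_simp
  ring
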